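/- arXiv:1610.06841 — 4 statements merged into one kernel-verified Lean document; each statement's English description precedes it below -/
import Mathlib

section
/- For every integer n ≥ 0, the identity ∑_{j=0}^{n} (2j+1) * C(2j, j) * C(2(n-j), n-j) = (n+1) * 4^n holds, where C denotes the binomial coefficient. -/
open Finset Nat

private lemma reflect_pair (n m : ℕ) (w : ℕ → ℕ) (hw : ∀ j ≤ n, w j + w (n - j) = m) :
    2 * ∑ j ∈ range (n + 1), w j * Nat.centralBinom j * Nat.centralBinom (n - j)
      = m * ∑ j ∈ range (n + 1), Nat.centralBinom j * Nat.centralBinom (n - j) := by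
  rw [two_mul]
  nth_rewrite 2 [← Finset.sum_range_reflect]
  rw [← Finset.sum_add_distrib, Finset.mul_sum]
  refine Finset.sum_congr rfl fun j hj => ?_
  rw [Finset.mem_range, Nat.lt_succ_iff] at hj
  have h1 : n + 1 - 1 - j = n - j := by omega
  rw [h1, Nat.sub_sub_self hj]
  have hwj := hw j hj
  obtain ⟨k, hk⟩ := Nat.le.dest hj
  subst hk
  simp only [Nat.add_sub_cancel_left] at hwj ⊢
  rw [← hwj]; ring

private lemma conv_central (n : ℕ) :
    ∑ j ∈ range (n + 1), Nat.centralBinom j * Nat.centralBinom (n - j) = 4 ^ n := by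
  induction n with
  | zero => simp [Nat.centralBinom]
  | succ n ih =>
    have hS2 := reflect_pair (n + 1) (n + 1) (fun j => j) (fun j hj => by omega)
    have hS : ∑ j ∈ range (n + 2), j * Nat.centralBinom j * Nat.centralBinom (n + 1 - j)
        = 2 * ∑ j ∈ range (n + 1),
            (2 * j + 1) * Nat.centralBinom j * Nat.centralBinom (n - j) := by
      rw [Finset.sum_range_succ', Finset.mul_sum]
      simp only [Nat.zero_mul, Nat.add_zero, Nat.succ_sub_succ]
      refine Finset.sum_congr rfl fun j hj => ?_
      have := Nat.succ_mul_centralBinom_succ j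
      calc (j + 1) * Nat.centralBinom (j + 1) * Nat.centralBinom (n - j)
          = 2 * (2 * j + 1) * Nat.centralBinom j * Nat.centralBinom (n - j) := by rw [this]
        _ = 2 * ((2 * j + 1) * Nat.centralBinom j * Nat.centralBinom (n - j)) := by ring
    have hB := reflect_pair n (2 * n + 2) (fun j => 2 * j + 1) (fun j hj => by omega)
    rw [ih] at hB
    have key : (n + 1) * ∑ j ∈ range (n + 2),
        Nat.centralBinom j * Nat.centralBinom (n + 1 - j) = (n + 1) * 4 ^ (n + 1) := by
      rw [← hS2, hS]
      calc 2 * (2 * ∑ j ∈ range (n + 1),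
              (2 * j + 1) * Nat.centralBinom j * Nat.centralBinom (n - j))
          = 2 * ((2 * n + 2) * 4 ^ n) := by rw [hB]
        _ = (n + 1) * 4 ^ (n + 1) := by ring
    exact Nat.eq_of_mul_eq_mul_left (Nat.succ_pos n) key

theorem sum_odd_central_binomial (n : ℕ) :
    ∑ j ∈ Finset.range (n + 1),
      (2 * j + 1) * Nat.choose (2 * j) j * Nat.choose (2 * (n - j)) (n - j)
      = (n + 1) * 4 ^ n := by
  have hB := reflect_pair n (2 * n + 2) (fun j => 2 * j + 1) (fun j hj => by omega)
  rw [conv_central] at hB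
  have h : ∀ j, Nat.choose (2 * j) j = Nat.centralBinom j := fun j => rfl
  simp only [h]
  apply Nat.eq_of_mul_eq_mul_left (show 0 < 2 by norm_num)
  rw [hB]; ring
end

section
/- For every integer n ≥ 0, the identity ∑_{j=0}^{n} C(2j, j) * C(2(n-j), n-j) = 4^n holds. -/
open Finset Nat

private lemma sym_aux (m : ℕ) :
    ∑ j ∈ Finset.range (m + 1), 2 * j * (Nat.centralBinom j * Nat.centralBinom (m - j))
      = m * ∑ j ∈ Finset.range (m + 1), Nat.centralBinom j * Nat.centralBinom (m - j) := by
  have h := Finset.sum_range_reflect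
    (fun j => j * (Nat.centralBinom j * Nat.centralBinom (m - j))) (m + 1)
  have h2 : ∑ j ∈ Finset.range (m + 1),
      (m - j) * (Nat.centralBinom (m - j) * Nat.centralBinom j)
      = ∑ j ∈ Finset.range (m + 1),
      j * (Nat.centralBinom j * Nat.centralBinom (m - j)) := by
    rw [← h]
    apply Finset.sum_congr rfl
    intro j hj
    have hjm : j ≤ m := Nat.lt_succ_iff.mp (Finset.mem_range.mp hj)
    simp [Nat.add_sub_cancel, Nat.sub_sub_self hjm]
  calc ∑ j ∈ Finset.range (m + 1), 2 * j * (Nat.centralBinom j * Nat.centralBinom (m - j))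
      = ∑ j ∈ Finset.range (m + 1), j * (Nat.centralBinom j * Nat.centralBinom (m - j))
        + ∑ j ∈ Finset.range (m + 1), j * (Nat.centralBinom j * Nat.centralBinom (m - j)) := by
        rw [← Finset.sum_add_distrib]; exact Finset.sum_congr rfl fun j _ => by ring
    _ = ∑ j ∈ Finset.range (m + 1), j * (Nat.centralBinom j * Nat.centralBinom (m - j))
        + ∑ j ∈ Finset.range (m + 1), (m - j) * (Nat.centralBinom (m - j) * Nat.centralBinom j) := by
        rw [h2]
    _ = ∑ j ∈ Finset.range (m + 1), (j * (Nat.centralBinom j * Nat.centralBinom (m - j))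
        + (m - j) * (Nat.centralBinom (m - j) * Nat.centralBinom j)) := Finset.sum_add_distrib.symm
    _ = ∑ j ∈ Finset.range (m + 1), m * (Nat.centralBinom j * Nat.centralBinom (m - j)) := by
        refine Finset.sum_congr rfl fun j hj => ?_
        have hjm : j ≤ m := Nat.lt_succ_iff.mp (Finset.mem_range.mp hj)
        calc j * (Nat.centralBinom j * Nat.centralBinom (m - j))
            + (m - j) * (Nat.centralBinom (m - j) * Nat.centralBinom j)
            = (j + (m - j)) * (Nat.centralBinom j * Nat.centralBinom (m - j)) := by ring
          _ = m * (Nat.centralBinom j * Nat.centralBinom (m - j)) := by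
              rw [Nat.add_sub_cancel' hjm]
    _ = m * ∑ j ∈ Finset.range (m + 1), Nat.centralBinom j * Nat.centralBinom (m - j) :=
        (Finset.mul_sum ..).symm

private lemma key (n : ℕ) :
    ∑ j ∈ Finset.range (n + 2), Nat.centralBinom j * Nat.centralBinom (n + 1 - j)
      = 4 * ∑ j ∈ Finset.range (n + 1), Nat.centralBinom j * Nat.centralBinom (n - j) := by
  set T0 := ∑ j ∈ Finset.range (n + 1), Nat.centralBinom j * Nat.centralBinom (n - j) with hT0
  set T1 := ∑ j ∈ Finset.range (n + 2), Nat.centralBinom j * Nat.centralBinom (n + 1 - j) with hT1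
  have hS1 : ∑ j ∈ Finset.range (n + 2),
      2 * j * (Nat.centralBinom j * Nat.centralBinom (n + 1 - j)) = (n + 1) * T1 := sym_aux (n + 1)
  have hS0 : ∑ j ∈ Finset.range (n + 1),
      2 * j * (Nat.centralBinom j * Nat.centralBinom (n - j)) = n * T0 := sym_aux n
  have hshift : ∑ j ∈ Finset.range (n + 2),
      2 * j * (Nat.centralBinom j * Nat.centralBinom (n + 1 - j))
      = ∑ i ∈ Finset.range (n + 1),
      2 * (i + 1) * (Nat.centralBinom (i + 1) * Nat.centralBinom (n - i)) := by
    rw [Finset.sum_range_succ' (fun j => 2 * j * (Nat.centralBinom j * Nat.centralBinom (n + 1 - j))) (n + 1)]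
    simp
  have hrec : ∀ i : ℕ, 2 * (i + 1) * (Nat.centralBinom (i + 1) * Nat.centralBinom (n - i))
      = 2 * (2 * (2 * i + 1) * (Nat.centralBinom i * Nat.centralBinom (n - i))) := by
    intro i
    have := Nat.succ_mul_centralBinom_succ i
    calc 2 * (i + 1) * (Nat.centralBinom (i + 1) * Nat.centralBinom (n - i))
        = 2 * ((i + 1) * Nat.centralBinom (i + 1)) * Nat.centralBinom (n - i) := by ring
      _ = 2 * (2 * (2 * i + 1) * Nat.centralBinom i) * Nat.centralBinom (n - i) := by rw [this]
      _ = 2 * (2 * (2 * i + 1) * (Nat.centralBinom i * Nat.centralBinom (n - i))) := by ring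
  have hmain : (n + 1) * T1 = 4 * ((n + 1) * T0) := by
    rw [← hS1, hshift]
    rw [Finset.sum_congr rfl (fun i _ => hrec i)]
    have expand : ∀ i : ℕ, 2 * (2 * (2 * i + 1) * (Nat.centralBinom i * Nat.centralBinom (n - i)))
        = 4 * (2 * i * (Nat.centralBinom i * Nat.centralBinom (n - i)))
          + 4 * (Nat.centralBinom i * Nat.centralBinom (n - i)) := fun i => by ring
    rw [Finset.sum_congr rfl (fun i _ => expand i), Finset.sum_add_distrib,
      ← Finset.mul_sum, ← Finset.mul_sum, hS0, ← hT0]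
    ring
  exact Nat.eq_of_mul_eq_mul_left (Nat.succ_pos n) (by linarith [hmain])

theorem sum_central_binomial (n : ℕ) :
    ∑ j ∈ Finset.range (n + 1),
      Nat.choose (2 * j) j * Nat.choose (2 * (n - j)) (n - j) = 4 ^ n := by
  have h : ∀ m : ℕ, ∑ j ∈ Finset.range (m + 1),
      Nat.centralBinom j * Nat.centralBinom (m - j) = 4 ^ m := by
    intro m
    induction m with
    | zero => simp [Nat.centralBinom]
    | succ k ih => rw [key k, ih]; ring
  simpa [Nat.centralBinom] using h n
end

section
/- For h and k coprime integers with k ≥ 1, the Dedekind sum satisfies the reciprocity law s(h,k) + s(k,h) = -1/4 + (h/k + 1/(h*k) + k/h)/12. -/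
open Classical

/-- The sawtooth function ((x)): equals `x - ⌊x⌋ - 1/2` for non-integral `x`
and `0` for integral `x`. -/
noncomputable def sawtooth (x : ℝ) : ℝ :=
  if ∃ m : ℤ, x = m then 0 else x - ⌊x⌋ - 1 / 2

/-- The Dedekind sum `s(h,k) = ∑_{m=0}^{k-1} ((h m / k)) ((m / k))`. -/
noncomputable def dedekindSum (h k : ℤ) : ℝ :=
  ∑ m ∈ Finset.range k.toNat, sawtooth ((h : ℝ) * m / k) * sawtooth ((m : ℝ) / k)


-- Gauss sums
lemma sum_id_real (n : ℕ) : ∑ i ∈ Finset.range n, (i : ℝ) = n * (n - 1) / 2 := by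
  induction n with
  | zero => simp
  | succ n ih => rw [Finset.sum_range_succ, ih]; push_cast; ring

lemma sum_sq_real (n : ℕ) :
    ∑ i ∈ Finset.range n, (i : ℝ) ^ 2 = n * (n - 1) * (2 * n - 1) / 6 := by
  induction n with
  | zero => simp
  | succ n ih => rw [Finset.sum_range_succ, ih]; push_cast; ring

lemma aux_not_dvd {h k : ℤ} (hco : IsCoprime k h) (hk : 1 ≤ k) {m : ℕ}
    (h1 : 1 ≤ m) (h2 : (m : ℤ) < k) : ¬ (k ∣ h * m) := by
  intro hd
  have hkm : k ∣ (m : ℤ) := hco.dvd_of_dvd_mul_left hd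
  have := Int.le_of_dvd (by exact_mod_cast h1) hkm
  omega

lemma sawtooth_eq {k a : ℤ} (hk : 0 < k) (ha : ¬ k ∣ a) :
    sawtooth ((a : ℝ) / k) = ((a % k : ℤ) : ℝ) / k - 1 / 2 := by
  have hkR : (0:ℝ) < (k : ℝ) := by exact_mod_cast hk
  have hkne : (k : ℝ) ≠ 0 := ne_of_gt hkR
  have hnint : ¬ ∃ m : ℤ, (a : ℝ) / k = m := by
    rintro ⟨z, hz⟩
    rw [div_eq_iff hkne] at hz
    exact ha ⟨z, by exact_mod_cast hz.trans (mul_comm _ _)⟩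
  have hr0 : 0 ≤ a % k := Int.emod_nonneg _ (by omega)
  have hrk : a % k < k := Int.emod_lt_of_pos _ hk
  have hed : a % k + k * (a / k) = a := Int.emod_add_mul_ediv a k
  have hfloor : ⌊(a : ℝ) / k⌋ = a / k := by
    rw [Int.floor_eq_iff]
    constructor
    · rw [le_div_iff₀ hkR]
      have : (k : ℝ) * (a / k : ℤ) ≤ (a : ℝ) := by
        have : k * (a / k) ≤ a := by omega
        exact_mod_cast this
      linarith
    · rw [div_lt_iff₀ hkR]
      have : (a : ℝ) < (k : ℝ) * ((a / k : ℤ) + 1) := by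
        have : a < k * (a / k + 1) := by
          have : k * (a / k + 1) = k * (a/k) + k := by ring
          omega
        exact_mod_cast this
      linarith
  rw [sawtooth, if_neg hnint, hfloor]
  have hcast : ((a % k : ℤ) : ℝ) = (a : ℝ) - k * ((a / k : ℤ) : ℝ) := by
    have h2 := congrArg (fun z : ℤ => (z : ℝ)) hed
    push_cast at h2
    linarith
  rw [hcast]
  field_simp

lemma aux_bij {h k : ℤ} (hco : IsCoprime h k) (hk : 1 ≤ k) (f : ℤ → ℝ) :
    ∑ m ∈ Finset.Ico 1 k.toNat, f ((h * m) % k)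
      = ∑ m ∈ Finset.Ico 1 k.toNat, f (m : ℤ) := by
  obtain ⟨u, v, huv⟩ := hco
  have hk0 : (0:ℤ) < k := hk
  have key : ∀ a m : ℤ, (a * (m % k)) % k = (a * m) % k := by
    intro a m
    rw [Int.mul_emod, Int.emod_emod_of_dvd _ dvd_rfl, ← Int.mul_emod]
  have mem : ∀ c : ℤ, IsCoprime k c → ∀ m ∈ Finset.Ico 1 k.toNat,
      ((c * m) % k).toNat ∈ Finset.Ico 1 k.toNat := by
    intro c hc m hm
    rw [Finset.mem_Ico] at hm ⊢
    have h1 : 1 ≤ m := hm.1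
    have h2 : (m : ℤ) < k := by
      have := hm.2; omega
    have hnn : 0 ≤ (c * m) % k := Int.emod_nonneg _ (by omega)
    have hlt : (c * m) % k < k := Int.emod_lt_of_pos _ hk0
    have hne : (c * m) % k ≠ 0 := by
      intro hmod
      exact aux_not_dvd hc hk h1 h2 (Int.dvd_of_emod_eq_zero hmod)
    omega
  have round : ∀ a b : ℤ, a * b % k = 1 % k → ∀ m ∈ Finset.Ico 1 k.toNat,
      ((a * (((b * m) % k).toNat : ℤ)) % k).toNat = m := by
    intro a b hab m hm
    rw [Finset.mem_Ico] at hm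
    have h2 : (m : ℤ) < k := by have := hm.2; omega
    have hk2 : (2:ℤ) ≤ k := by have := hm.1; have := hm.2; omega
    have h1k : (1:ℤ) % k = 1 := Int.emod_eq_of_lt (by norm_num) (by omega)
    have hnn : 0 ≤ (b * m) % k := Int.emod_nonneg _ (by omega)
    rw [Int.toNat_of_nonneg hnn, key, show a * (b * m) = m * (a * b) by ring,
      ← key m (a*b), hab, h1k, mul_one,
      Int.emod_eq_of_lt (by positivity) h2]
    omega
  have hkh : IsCoprime k h := ⟨v, u, by linarith⟩
  have hku : IsCoprime k u := ⟨v, h, by linarith⟩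
  have huh : u * h % k = 1 % k := by
    rw [show u * h = 1 + (-v) * k by linarith, Int.add_mul_emod_self_right]
  have hhu : h * u % k = 1 % k := by rw [mul_comm]; exact huh
  refine Finset.sum_nbij' (fun m => ((h * m) % k).toNat)
    (fun m => ((u * m) % k).toNat) (mem h hkh) (mem u hku)
    (round u h huh) (round h u hhu) ?_
  intro m hm
  congr 1
  rw [Int.toNat_of_nonneg (Int.emod_nonneg _ (by omega))]

lemma toNat_cast_real {k : ℤ} (hk : 0 ≤ k) : ((k.toNat : ℕ) : ℝ) = (k : ℝ) := by
  exact_mod_cast congrArg (fun z : ℤ => (z : ℝ)) (Int.toNat_of_nonneg hk)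

lemma sum_id_Ico {k : ℤ} (hk : 1 ≤ k) :
    ∑ m ∈ Finset.Ico 1 k.toNat, (m : ℝ) = (k:ℝ) * ((k:ℝ) - 1) / 2 := by
  have h1 : (1:ℕ) ≤ k.toNat := by omega
  rw [Finset.sum_Ico_eq_sub _ h1, sum_id_real, sum_id_real, toNat_cast_real (by omega)]
  norm_num

lemma sum_sq_Ico {k : ℤ} (hk : 1 ≤ k) :
    ∑ m ∈ Finset.Ico 1 k.toNat, (m : ℝ)^2
      = (k:ℝ) * ((k:ℝ) - 1) * (2*(k:ℝ) - 1) / 6 := by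
  have h1 : (1:ℕ) ≤ k.toNat := by omega
  rw [Finset.sum_Ico_eq_sub _ h1, sum_sq_real, sum_sq_real, toNat_cast_real (by omega)]
  norm_num

lemma aux_s {h k : ℤ} (hco : IsCoprime h k) (hh : 1 ≤ h) (hk : 1 ≤ k) :
    dedekindSum h k
      = (∑ m ∈ Finset.Ico 1 k.toNat, (m:ℝ) * (((h * m) % k : ℤ) : ℝ)) / (k:ℝ)^2
        - ((k:ℝ) - 1) / 4 := by
  have hk0 : (0:ℤ) < k := hk
  have hK1 : 1 ≤ k.toNat := by omega
  have hkR := toNat_cast_real (k := k) (by omega)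
  have hkne : (k:ℝ) ≠ 0 := by
    have : (0:ℝ) < (k:ℝ) := by exact_mod_cast hk0
    linarith
  -- rewrite the sum term-by-term on Ico 1 K
  have hterm : ∀ m ∈ Finset.Ico 1 k.toNat,
      sawtooth ((h : ℝ) * m / k) * sawtooth ((m : ℝ) / k)
        = ((((h * m) % k : ℤ) : ℝ) / k - 1/2) * ((m:ℝ)/k - 1/2) := by
    intro m hm
    rw [Finset.mem_Ico] at hm
    have h2 : (m : ℤ) < k := by have := hm.2; omega
    have hnd : ¬ (k ∣ h * m) := aux_not_dvd hco.symm hk hm.1 h2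
    have hndm : ¬ (k ∣ (m:ℤ)) := by
      intro hd
      have := Int.le_of_dvd (by exact_mod_cast hm.1) hd
      omega
    have e1 : sawtooth ((h : ℝ) * m / k) = (((h * m) % k : ℤ) : ℝ) / k - 1/2 := by
      have hc : (((h * (m:ℕ) : ℤ)) : ℝ) = (h : ℝ) * m := by push_cast; ring
      rw [← hc]
      exact sawtooth_eq hk0 hnd
    have e2 : sawtooth ((m : ℝ) / k) = ((m:ℝ)) / k - 1/2 := by
      have hc : ((((m:ℕ) : ℤ)) : ℝ) = (m : ℝ) := by push_cast; ring
      rw [← hc]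
      rw [sawtooth_eq hk0 hndm, Int.emod_eq_of_lt (by positivity) h2]
    rw [e1, e2]
  -- split off m = 0
  rw [dedekindSum, Finset.range_eq_Ico, Finset.sum_eq_sum_Ico_succ_bot (by omega : 0 < k.toNat)]
  have hz : sawtooth ((h : ℝ) * (0:ℕ) / k) * sawtooth (((0:ℕ) : ℝ) / k) = 0 := by
    have : sawtooth 0 = 0 := by rw [sawtooth, if_pos ⟨0, by norm_num⟩]
    norm_num [this]
  rw [hz, zero_add, Finset.sum_congr rfl hterm]
  -- expand the product
  have hexp : ∀ m ∈ Finset.Ico 1 k.toNat,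
      ((((h * m) % k : ℤ) : ℝ) / k - 1/2) * ((m:ℝ)/k - 1/2)
        = ((m:ℝ) * (((h * m) % k : ℤ) : ℝ)) / (k:ℝ)^2
          - (((h * m) % k : ℤ) : ℝ) / (2*k) - (m:ℝ) / (2*k) + 1/4 := by
    intro m _
    field_simp
    ring
  rw [Finset.sum_congr rfl hexp]
  simp only [Finset.sum_add_distrib, Finset.sum_sub_distrib, ← Finset.sum_div]
  rw [aux_bij hco hk (fun x => (x:ℝ))]
  push_cast
  rw [sum_id_Ico hk, Finset.sum_const, Nat.card_Ico, nsmul_eq_mul]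
  have hcard : (((k.toNat - 1 : ℕ)) : ℝ) = (k:ℝ) - 1 := by
    rw [Nat.cast_sub hK1, hkR]; norm_num
  rw [hcard]
  field_simp
  ring

lemma aux_T {h k : ℤ} (hco : IsCoprime h k) (hh : 1 ≤ h) (hk : 1 ≤ k) :
    ∑ m ∈ Finset.Ico 1 k.toNat, (m:ℝ) * (((h * m) / k : ℤ) : ℝ)
      = ∑ n ∈ Finset.Ico 1 h.toNat,
          ((k:ℝ) * ((k:ℝ) - 1) / 2
            - ((((k * n) / h : ℤ) : ℝ) * (((((k * n) / h : ℤ)) : ℝ) + 1)) / 2) := by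
  have hk0 : (0:ℤ) < k := hk
  have hh0 : (0:ℤ) < h := hh
  -- the strict inequality is equivalent to both floor conditions
  have hiff : ∀ m ∈ Finset.Ico 1 k.toNat, ∀ n ∈ Finset.Ico 1 h.toNat,
      ((k * (n:ℤ) < h * (m:ℤ)) ↔ (n:ℤ) ≤ (h * m) / k)
      ∧ ((k * (n:ℤ) < h * (m:ℤ)) ↔ ¬ ((m:ℤ) ≤ (k * n) / h)) := by
    intro m hm n hn
    rw [Finset.mem_Ico] at hm hn
    have h2 : (m:ℤ) < k := by have := hm.2; omega
    have h2n : (n:ℤ) < h := by have := hn.2; omega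
    have hne : k * (n:ℤ) ≠ h * (m:ℤ) := by
      intro he
      exact aux_not_dvd hco.symm hk hm.1 h2 ⟨n, he.symm⟩
    constructor
    · rw [Int.le_ediv_iff_mul_le hk0]
      constructor
      · intro hlt; rw [mul_comm]; omega
      · intro hle
        rcases lt_or_eq_of_le (by rw [mul_comm] at hle; exact hle) with hl | he
        · exact hl
        · exact absurd he hne
    · rw [Int.le_ediv_iff_mul_le hh0]
      constructor
      · intro hlt hle
        have : (m:ℤ) * h ≤ k * n := hle
        nlinarith
      · intro hnl
        have : ¬ ((m:ℤ) * h ≤ k * n) := hnl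
        push_neg at this
        rw [mul_comm h (m:ℤ)]
        omega
  -- step 1 : each d_m as a count over n
  have step1 : ∀ m ∈ Finset.Ico 1 k.toNat,
      (m:ℝ) * (((h * m) / k : ℤ) : ℝ)
        = ∑ n ∈ Finset.Ico 1 h.toNat,
            (if k * ((n:ℕ):ℤ) < h * (m:ℤ) then (m:ℝ) else 0) := by
    intro m hm
    have hmm := hm
    rw [Finset.mem_Ico] at hmm
    have h2 : (m:ℤ) < k := by have := hmm.2; omega
    set d : ℤ := (h * m) / k with hd
    have hd0 : 0 ≤ d := Int.ediv_nonneg (by positivity) hk0.le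
    have hdh : d < h := by
      rw [hd, Int.ediv_lt_iff_lt_mul hk0]
      have : (m:ℤ) < k := h2
      nlinarith
    have hfilter : (Finset.Ico 1 h.toNat).filter (fun n : ℕ => k * (n:ℤ) < h * (m:ℤ))
        = Finset.Ico 1 (d.toNat + 1) := by
      ext n
      simp only [Finset.mem_filter, Finset.mem_Ico]
      constructor
      · rintro ⟨⟨h1n, h2n⟩, hP⟩
        have := ((hiff m hm n (by rw [Finset.mem_Ico]; exact ⟨h1n, h2n⟩)).1).1 hP
        omega
      · rintro ⟨h1n, h2n⟩
        have hnh : n < h.toNat := by omega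
        have hiff1 := (hiff m hm n (by rw [Finset.mem_Ico]; exact ⟨h1n, hnh⟩)).1
        exact ⟨⟨h1n, hnh⟩, hiff1.2 (by omega)⟩
    rw [← Finset.sum_filter, hfilter, Finset.sum_const, Nat.card_Ico, nsmul_eq_mul]
    have : ((d.toNat + 1 - 1 : ℕ) : ℝ) = (d : ℝ) := by
      simp [toNat_cast_real hd0]
    rw [this, mul_comm]
  rw [Finset.sum_congr rfl step1, Finset.sum_comm]
  -- step 2 : inner sum over m
  apply Finset.sum_congr rfl
  intro n hn
  have hnn := hn
  rw [Finset.mem_Ico] at hnn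
  have h2n : (n:ℤ) < h := by have := hnn.2; omega
  set e : ℤ := (k * n) / h with he
  have he0 : 0 ≤ e := Int.ediv_nonneg (by positivity) hh0.le
  have hek : e < k := by
    rw [he, Int.ediv_lt_iff_lt_mul hh0]
    nlinarith
  have hfilter : (Finset.Ico 1 k.toNat).filter (fun m : ℕ => k * (n:ℤ) < h * (m:ℤ))
      = Finset.Ico (e.toNat + 1) k.toNat := by
    ext m
    simp only [Finset.mem_filter, Finset.mem_Ico]
    constructor
    · rintro ⟨⟨h1m, h2m⟩, hP⟩
      have := ((hiff m (by rw [Finset.mem_Ico]; exact ⟨h1m, h2m⟩) n hn).2).1 hP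
      omega
    · rintro ⟨h1m, h2m⟩
      have h1m' : 1 ≤ m := by omega
      have hiff2 := (hiff m (by rw [Finset.mem_Ico]; exact ⟨h1m', h2m⟩) n hn).2
      exact ⟨⟨h1m', h2m⟩, hiff2.2 (by omega)⟩
  rw [← Finset.sum_filter, hfilter,
    Finset.sum_Ico_eq_sub _ (by omega : e.toNat + 1 ≤ k.toNat),
    sum_id_real, sum_id_real, toNat_cast_real hk0.le]
  have hc : ((e.toNat + 1 : ℕ) : ℝ) = (e : ℝ) + 1 := by
    push_cast [toNat_cast_real he0]
    ring
  rw [hc]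
  ring

/-- Dedekind sum reciprocity:
`s(h,k) + s(k,h) = -1/4 + (h/k + 1/(hk) + k/h)/12` for coprime `h, k ≥ 1`. -/
theorem dedekindSum_reciprocity (h k : ℤ) (hco : IsCoprime h k)
    (hh : 1 ≤ h) (hk : 1 ≤ k) :
    dedekindSum h k + dedekindSum k h =
      -(1 / 4) + ((h : ℝ) / k + 1 / ((h : ℝ) * k) + (k : ℝ) / h) / 12 := by
  have hk0 : (0:ℤ) < k := hk
  have hh0 : (0:ℤ) < h := hh
  have hkR : (0:ℝ) < (k:ℝ) := by exact_mod_cast hk0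
  have hhR : (0:ℝ) < (h:ℝ) := by exact_mod_cast hh0
  have hkne : (k:ℝ) ≠ 0 := ne_of_gt hkR
  have hhne : (h:ℝ) ≠ 0 := ne_of_gt hhR
  have hre : ∀ a b : ℤ, ((a % b : ℤ) : ℝ) = (a:ℝ) - (b:ℝ) * ((a / b : ℤ) : ℝ) := by
    intro a b
    have h2 := congrArg (fun z : ℤ => (z:ℝ)) (Int.emod_add_mul_ediv a b)
    push_cast at h2
    linarith
  set A' : ℝ := ∑ n ∈ Finset.Ico 1 h.toNat, (n:ℝ) * (((k * n) % h : ℤ) : ℝ) with hA'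
  set P : ℝ := (h:ℝ)*((h:ℝ)-1)*(2*(h:ℝ)-1)/6 with hP
  have hρ1 : ∑ n ∈ Finset.Ico 1 h.toNat, (((k * n) % h : ℤ) : ℝ)
      = (h:ℝ)*((h:ℝ)-1)/2 := by
    rw [aux_bij hco.symm hh (fun x => (x:ℝ))]
    push_cast
    exact sum_id_Ico hh
  have hρ2 : ∑ n ∈ Finset.Ico 1 h.toNat, (((k * n) % h : ℤ) : ℝ)^2 = P := by
    rw [aux_bij hco.symm hh (fun x => (x:ℝ)^2)]
    push_cast
    exact sum_sq_Ico hh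
  have hE1 : ∑ n ∈ Finset.Ico 1 h.toNat, (((k * n) / h : ℤ) : ℝ)
      = ((k:ℝ)-1)*((h:ℝ)-1)/2 := by
    have hterm : ∀ n ∈ Finset.Ico 1 h.toNat, (((k * n) / h : ℤ) : ℝ)
        = ((k:ℝ)*(n:ℝ) - (((k * n) % h : ℤ) : ℝ))/(h:ℝ) := by
      intro n _
      rw [hre (k*n) h]
      push_cast
      field_simp
      ring
    rw [Finset.sum_congr rfl hterm, ← Finset.sum_div, Finset.sum_sub_distrib,
      ← Finset.mul_sum, hρ1, sum_id_Ico hh]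
    field_simp
  have hE2 : ∑ n ∈ Finset.Ico 1 h.toNat, (((k * n) / h : ℤ) : ℝ)^2
      = ((k:ℝ)^2*P - 2*(k:ℝ)*A' + P)/(h:ℝ)^2 := by
    have hterm : ∀ n ∈ Finset.Ico 1 h.toNat, (((k * n) / h : ℤ) : ℝ)^2
        = ((k:ℝ)^2*(n:ℝ)^2 - 2*(k:ℝ)*((n:ℝ) * (((k * n) % h : ℤ) : ℝ))
            + (((k * n) % h : ℤ) : ℝ)^2)/(h:ℝ)^2 := by
      intro n _
      have hth := hre (k*n) h
      rw [hth]
      push_cast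
      field_simp
      ring
    rw [Finset.sum_congr rfl hterm, ← Finset.sum_div, Finset.sum_add_distrib,
      Finset.sum_sub_distrib, ← Finset.mul_sum, ← Finset.mul_sum, hρ2, ← hA',
      sum_sq_Ico hh, ← hP]
  -- the T sum
  have hT : ∑ m ∈ Finset.Ico 1 k.toNat, (m:ℝ) * (((h * m) / k : ℤ) : ℝ)
      = ((h:ℝ)-1) * ((k:ℝ) * ((k:ℝ)-1)/2)
        - (((k:ℝ)^2*P - 2*(k:ℝ)*A' + P)/(h:ℝ)^2 + ((k:ℝ)-1)*((h:ℝ)-1)/2)/2 := by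
    rw [aux_T hco hh hk]
    have hterm : ∀ n ∈ Finset.Ico 1 h.toNat,
        ((k:ℝ) * ((k:ℝ) - 1) / 2
          - ((((k * n) / h : ℤ) : ℝ) * (((((k * n) / h : ℤ)) : ℝ) + 1)) / 2)
        = (k:ℝ) * ((k:ℝ) - 1) / 2 - ((((k * n) / h : ℤ) : ℝ)^2
            + (((k * n) / h : ℤ) : ℝ))/2 := by
      intro n _
      ring
    have hhalf : ∑ n ∈ Finset.Ico 1 h.toNat, (((((k * n) / h : ℤ) : ℝ)^2
            + (((k * n) / h : ℤ) : ℝ))/2)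
        = ((∑ n ∈ Finset.Ico 1 h.toNat, (((k * n) / h : ℤ) : ℝ)^2)
            + (∑ n ∈ Finset.Ico 1 h.toNat, (((k * n) / h : ℤ) : ℝ)))/2 := by
      rw [← Finset.sum_div, Finset.sum_add_distrib]
    rw [Finset.sum_congr rfl hterm, Finset.sum_sub_distrib, hhalf, hE1, hE2,
      Finset.sum_const, Nat.card_Ico, nsmul_eq_mul]
    have hc : ((h.toNat - 1 : ℕ) : ℝ) = (h:ℝ) - 1 := by
      rw [Nat.cast_sub (by omega), toNat_cast_real hh0.le]
      norm_num
    rw [hc]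
  -- A in terms of T
  have hA : (∑ m ∈ Finset.Ico 1 k.toNat, (m:ℝ) * (((h * m) % k : ℤ) : ℝ))
      = (h:ℝ) * ((k:ℝ)*((k:ℝ)-1)*(2*(k:ℝ)-1)/6)
        - (k:ℝ) * (∑ m ∈ Finset.Ico 1 k.toNat, (m:ℝ) * (((h * m) / k : ℤ) : ℝ)) := by
    have hterm : ∀ m ∈ Finset.Ico 1 k.toNat,
        (m:ℝ) * (((h * m) % k : ℤ) : ℝ)
          = (h:ℝ) * (m:ℝ)^2 - (k:ℝ) * ((m:ℝ) * (((h * m) / k : ℤ) : ℝ)) := by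
      intro m _
      rw [hre (h*m) k]
      push_cast
      ring
    rw [Finset.sum_congr rfl hterm, Finset.sum_sub_distrib, ← Finset.mul_sum,
      ← Finset.mul_sum, sum_sq_Ico hk]
  rw [aux_s hco hh hk, aux_s hco.symm hk hh, ← hA', hA, hT, hP]
  field_simp
  ring
end

section
/- For M ∈ SL(2,ℝ) and z in the upper half-plane, log(conj(j(M,z))) = conj(log(j(M,z))) + 2πi·ρ(M), where ρ(M) = 1 if the bottom-left entry of M is 0 and the bottom-right entry of M is negative, and ρ(M) = 0 otherwise. -/
/-- The automorphy factor `j(M, z) = c z + d` for `M = (a, b; c, d)`. -/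
noncomputable def jfac (M : Matrix (Fin 2) (Fin 2) ℝ) (z : ℂ) : ℂ :=
  (M 1 0 : ℂ) * z + (M 1 1 : ℂ)

/-- The Möbius action of `M = (a, b; c, d)` on `z`: `(a z + b) / (c z + d)`. -/
noncomputable def moebius (M : Matrix (Fin 2) (Fin 2) ℝ) (z : ℂ) : ℂ :=
  ((M 0 0 : ℂ) * z + (M 0 1 : ℂ)) / ((M 1 0 : ℂ) * z + (M 1 1 : ℂ))

/-- The phase factor
`ω(M,N) = (−log j(MN,z) + log j(M, Nz) + log j(N,z)) / (2πi)`,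
using the principal branch of the complex logarithm. -/
noncomputable def phaseFactor (M N : Matrix (Fin 2) (Fin 2) ℝ) (z : ℂ) : ℂ :=
  (-Complex.log (jfac (M * N) z) + Complex.log (jfac M (moebius N z))
    + Complex.log (jfac N z)) / (2 * Real.pi * Complex.I)

/-- `ρ(M) = 1` if `c_M = 0` and `d_M < 0`, and `ρ(M) = 0` otherwise. -/
noncomputable def rho (M : Matrix (Fin 2) (Fin 2) ℝ) : ℝ :=
  if M 1 0 = 0 ∧ M 1 1 < 0 then 1 else 0

/-- `log(conj j(M,z)) = conj(log j(M,z)) + 2πi ρ(M)` for `M ∈ SL(2,ℝ)` and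
`z` in the upper half-plane. -/
theorem log_conj_jfac (M : Matrix (Fin 2) (Fin 2) ℝ) (hM : M.det = 1)
    (z : ℂ) (hz : 0 < z.im) :
    Complex.log (starRingEnd ℂ (jfac M z)) =
      starRingEnd ℂ (Complex.log (jfac M z))
        + 2 * Real.pi * Complex.I * (rho M : ℂ) := by
  by_cases hc : M 1 0 = 0
  · have hd : M 1 1 ≠ 0 := by
      intro h
      rw [Matrix.det_fin_two, hc, h] at hM
      simp at hM
    have hj : jfac M z = ((M 1 1 : ℝ) : ℂ) := by simp [jfac, hc]
    rcases lt_or_gt_of_ne hd with hneg | hpos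
    · have harg : (jfac M z).arg = Real.pi := by
        rw [hj]; exact Complex.arg_ofReal_of_neg hneg
      have hne : jfac M z ≠ 0 := by
        rw [hj]; exact_mod_cast Complex.ofReal_ne_zero.mpr hd
      have hrho : rho M = 1 := by simp [rho, hc, hneg]
      have hconj : starRingEnd ℂ (jfac M z) = jfac M z := by
        rw [hj]; simp
      rw [hconj, hrho]
      unfold Complex.log
      rw [map_add, harg]
      push_cast
      have : (starRingEnd ℂ) ((Real.pi : ℂ) * Complex.I)
          = -(Real.pi * Complex.I) := by
        simp [Complex.conj_I]
      rw [this]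
      have habs : (starRingEnd ℂ) ((Real.log (‖jfac M z‖) : ℂ))
          = (Real.log (‖jfac M z‖) : ℂ) := by simp
      rw [habs]; ring
    · have harg : (jfac M z).arg ≠ Real.pi := by
        rw [hj, Complex.arg_ofReal_of_nonneg hpos.le]
        exact fun h => Real.pi_ne_zero h.symm
      have hrho : rho M = 0 := by
        simp [rho, hc, not_lt.mpr hpos.le]
      rw [Complex.log_conj _ harg, hrho]
      simp
  · have him : (jfac M z).im ≠ 0 := by
      have h1 : (jfac M z).im = M 1 0 * z.im := by simp [jfac]
      rw [h1]
      exact mul_ne_zero hc (ne_of_gt hz)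
    have harg : (jfac M z).arg ≠ Real.pi := by
      intro h
      exact him ((Complex.arg_eq_pi_iff.mp h).2)
    have hrho : rho M = 0 := by simp [rho, hc]
    rw [Complex.log_conj _ harg, hrho]
    simp
end
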